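/- For finite discrete random variables S, S', W', C' on a common probability space, if S is independent of the triple (W', C', S'), S and S' take values in the same finite set \mathcal{S}, and S is uniformly distributed on \mathcal{S}, then I(S; (W', S'+S) | C') \le \log|\mathcal{S}| - H(S' | C') + I(S'; W' | C'), where + is modulo-|\mathcal{S}| addition. -/
import Mathlib


open Finset Real

noncomputable section

variable {Ω : Type} [Fintype Ω]

/-- Probability that `X = x` under the pmf `p` on the finite sample space `Ω`. -/
def pr {α : Type} [DecidableEq α] (p : Ω → ℝ) (X : Ω → α) (x : α) : ℝ :=
  ∑ ω, if X ω = x then p ω else 0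

/-- Shannon entropy (in nats) of a random variable `X`. -/
def ent {α : Type} [Fintype α] [DecidableEq α] (p : Ω → ℝ) (X : Ω → α) : ℝ :=
  ∑ x, Real.negMulLog (pr p X x)

/-- Conditional Shannon entropy `H(X | Y)`. -/
def condEnt {α β : Type} [Fintype α] [Fintype β] [DecidableEq α] [DecidableEq β]
    (p : Ω → ℝ) (X : Ω → α) (Y : Ω → β) : ℝ :=
  ent p (fun ω => (X ω, Y ω)) - ent p Y

/-- Mutual information `I(X; Y)`. -/
def mi {α β : Type} [Fintype α] [Fintype β] [DecidableEq α] [DecidableEq β]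
    (p : Ω → ℝ) (X : Ω → α) (Y : Ω → β) : ℝ :=
  ent p X + ent p Y - ent p (fun ω => (X ω, Y ω))

/-- Conditional mutual information `I(X; Y | Z)`. -/
def condMI {α β γ : Type} [Fintype α] [Fintype β] [Fintype γ]
    [DecidableEq α] [DecidableEq β] [DecidableEq γ]
    (p : Ω → ℝ) (X : Ω → α) (Y : Ω → β) (Z : Ω → γ) : ℝ :=
  condEnt p X Z - condEnt p X (fun ω => (Y ω, Z ω))

/-- `p` is a probability mass function. -/
def IsPMF (p : Ω → ℝ) : Prop := (∀ ω, 0 ≤ p ω) ∧ ∑ ω, p ω = 1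

/-- `X` and `Y` are independent random variables. -/
def IndepRV {α β : Type} [DecidableEq α] [DecidableEq β]
    (p : Ω → ℝ) (X : Ω → α) (Y : Ω → β) : Prop :=
  ∀ x y, pr p (fun ω => (X ω, Y ω)) (x, y) = pr p X x * pr p Y y

/-- `X` and `Y` are conditionally independent given `Z` (Markov chain `X - Z - Y`). -/
def CondIndep {α β γ : Type} [DecidableEq α] [DecidableEq β] [DecidableEq γ]
    (p : Ω → ℝ) (X : Ω → α) (Y : Ω → β) (Z : Ω → γ) : Prop :=
  ∀ x y z, pr p (fun ω => ((X ω, Y ω), Z ω)) ((x, y), z) * pr p Z z =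
    pr p (fun ω => (X ω, Z ω)) (x, z) * pr p (fun ω => (Y ω, Z ω)) (y, z)

/-- `X` is uniformly distributed on its (finite) alphabet. -/
def UniformRV {α : Type} [Fintype α] [DecidableEq α] (p : Ω → ℝ) (X : Ω → α) : Prop :=
  ∀ x, pr p X x = 1 / (Fintype.card α : ℝ)

lemma sum_pr {α : Type} [Fintype α] [DecidableEq α] (p : Ω → ℝ) (hp : IsPMF p) (X : Ω → α) :
    ∑ x, pr p X x = 1 := by
  unfold pr
  rw [Finset.sum_comm]
  simp [hp.2]

lemma pr_comp {α β : Type} [Fintype α] [DecidableEq α] [DecidableEq β]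
    (p : Ω → ℝ) (Z : Ω → α) (f : α → β) (b : β) :
    pr p (fun ω => f (Z ω)) b = ∑ a, if f a = b then pr p Z a else 0 := by
  unfold pr
  have : ∀ a : α, (if f a = b then ∑ ω, if Z ω = a then p ω else 0 else 0)
      = ∑ ω, if f a = b then (if Z ω = a then p ω else 0) else 0 := by
    intro a; split <;> simp
  simp_rw [this]
  rw [Finset.sum_comm]
  refine Finset.sum_congr rfl fun ω _ => ?_
  rw [Finset.sum_eq_single (Z ω)]
  · simp
  · intro a _ ha
    simp [Ne.symm ha]
  · simp

lemma pr_equiv {α β : Type} [DecidableEq α] [DecidableEq β]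
    (p : Ω → ℝ) (X : Ω → α) (e : α ≃ β) (a : α) :
    pr p (fun ω => e (X ω)) (e a) = pr p X a := by
  simp [pr]

lemma ent_equiv {α β : Type} [Fintype α] [Fintype β] [DecidableEq α] [DecidableEq β]
    (p : Ω → ℝ) (X : Ω → α) (e : α ≃ β) :
    ent p (fun ω => e (X ω)) = ent p X := by
  unfold ent
  rw [← Equiv.sum_comp e]
  exact Finset.sum_congr rfl fun a _ => by rw [pr_equiv]

lemma ent_pair_of_indep {α β : Type} [Fintype α] [Fintype β] [DecidableEq α] [DecidableEq β]
    (p : Ω → ℝ) (hp : IsPMF p) (X : Ω → α) (Y : Ω → β) (h : IndepRV p X Y) :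
    ent p (fun ω => (X ω, Y ω)) = ent p X + ent p Y := by
  unfold ent
  rw [Fintype.sum_prod_type]
  have key : ∀ x y, Real.negMulLog (pr p (fun ω => (X ω, Y ω)) (x, y)) =
      pr p Y y * Real.negMulLog (pr p X x) + pr p X x * Real.negMulLog (pr p Y y) := by
    intro x y; rw [h x y, Real.negMulLog_mul]
  simp_rw [key, Finset.sum_add_distrib]
  have e1 : ∑ x : α, ∑ y : β, pr p Y y * Real.negMulLog (pr p X x)
      = ∑ x : α, Real.negMulLog (pr p X x) := by
    simp_rw [← Finset.sum_mul, sum_pr p hp Y, one_mul]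
  have e2 : ∑ x : α, ∑ y : β, pr p X x * Real.negMulLog (pr p Y y)
      = ∑ y : β, Real.negMulLog (pr p Y y) := by
    simp_rw [← Finset.mul_sum, ← Finset.sum_mul, sum_pr p hp X, one_mul]
  rw [e1, e2]

lemma ent_uniform {α : Type} [Fintype α] [Nonempty α] [DecidableEq α]
    (p : Ω → ℝ) (X : Ω → α) (h : UniformRV p X) :
    ent p X = Real.log (Fintype.card α) := by
  have hc : (0:ℝ) < (Fintype.card α : ℝ) := by exact_mod_cast Fintype.card_pos
  have h' : ∀ x, pr p X x = 1 / (Fintype.card α : ℝ) := h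
  unfold ent
  simp_rw [h']
  rw [Finset.sum_const, nsmul_eq_mul]
  simp [Real.negMulLog, one_div, Real.log_inv]

lemma indep_comp {α β γ : Type} [Fintype α] [Fintype β] [DecidableEq α] [DecidableEq β] [DecidableEq γ]
    (p : Ω → ℝ) (X : Ω → α) (Y : Ω → β) (f : β → γ) (h : IndepRV p X Y) :
    IndepRV p X (fun ω => f (Y ω)) := by
  intro x c
  have h1 : pr p (fun ω => (X ω, f (Y ω))) (x, c)
      = ∑ z : α × β, if (z.1, f z.2) = (x, c) then pr p (fun ω => (X ω, Y ω)) z else 0 :=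
    pr_comp p (fun ω => (X ω, Y ω)) (fun z => (z.1, f z.2)) (x, c)
  rw [show (fun ω => (X ω, (fun ω => f (Y ω)) ω)) = (fun ω => (X ω, f (Y ω))) from rfl, h1,
    pr_comp p Y f c, Fintype.sum_prod_type, Finset.sum_comm, Finset.mul_sum]
  refine Finset.sum_congr rfl fun b _ => ?_
  simp only [Prod.mk.injEq, ite_and]
  rw [Finset.sum_ite_eq' Finset.univ x]
  simp [h x b, mul_ite]

/-- shift equiv -/
def eShift (m : ℕ) [NeZero m] (𝒲 𝒞 : Type) :
    (ZMod m × ((𝒲 × ZMod m) × 𝒞)) ≃ (ZMod m × ((𝒲 × ZMod m) × 𝒞)) where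
  toFun z := (z.1, ((z.2.1.1, z.2.1.2 + z.1), z.2.2))
  invFun z := (z.1, ((z.2.1.1, z.2.1.2 - z.1), z.2.2))
  left_inv z := by simp
  right_inv z := by simp

/-- reassoc equiv -/
def eAssoc (m : ℕ) [NeZero m] (𝒲 𝒞 : Type) :
    (ZMod m × (𝒲 × 𝒞)) ≃ ((𝒲 × ZMod m) × 𝒞) where
  toFun z := ((z.2.1, z.1), z.2.2)
  invFun z := (z.1.2, (z.1.1, z.2))
  left_inv z := by simp
  right_inv z := by simp


/-- Secrecy-leakage bound for the one-time-padded helper data in the CS model. -/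
theorem stmt1 (m : ℕ) [NeZero m] {𝒲 𝒞 : Type}
    [Fintype 𝒲] [DecidableEq 𝒲] [Fintype 𝒞] [DecidableEq 𝒞]
    (p : Ω → ℝ) (hp : IsPMF p) (S S' : Ω → ZMod m) (W' : Ω → 𝒲) (C' : Ω → 𝒞)
    (huni : UniformRV p S)
    (hind : IndepRV p S (fun ω => (W' ω, C' ω, S' ω))) :
    condMI p S (fun ω => (W' ω, S' ω + S ω)) C' ≤
      Real.log m - condEnt p S' C' + condMI p S' W' C' := by
  set W : Ω → 𝒲 × 𝒞 × ZMod m := fun ω => (W' ω, C' ω, S' ω) with hW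
  have hS : ∀ s, pr p S s = 1 / (m : ℝ) := fun s => by rw [huni s, ZMod.card]
  have entS : ent p S = Real.log m := by rw [ent_uniform p S huni, ZMod.card]
  -- E1 : H(S, C') = log m + H(C')
  have i1 : IndepRV p S C' := indep_comp p S W (fun z => z.2.1) hind
  have E1 : ent p (fun ω => (S ω, C' ω)) = Real.log m + ent p C' := by
    rw [ent_pair_of_indep p hp S C' i1, entS]
  -- E2 : H(S, ((W', S'+S), C')) = log m + H((W',S'), C')
  have i2 : IndepRV p S (fun ω => ((W' ω, S' ω), C' ω)) :=
    indep_comp p S W (fun z => ((z.1, z.2.2), z.2.1)) hind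
  have E2 : ent p (fun ω => (S ω, ((W' ω, S' ω + S ω), C' ω)))
      = Real.log m + ent p (fun ω => ((W' ω, S' ω), C' ω)) := by
    have h := ent_equiv p (fun ω => (S ω, ((W' ω, S' ω), C' ω))) (eShift m 𝒲 𝒞)
    have h2 : ent p (fun ω => (S ω, ((W' ω, S' ω + S ω), C' ω)))
        = ent p (fun ω => (S ω, ((W' ω, S' ω), C' ω))) := h
    rw [h2, ent_pair_of_indep p hp S _ i2, entS]
  -- key marginal computations for T = S' + S
  have hTW : ∀ (t : ZMod m) (w : 𝒲) (c : 𝒞),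
      pr p (fun ω => (S' ω + S ω, (W' ω, C' ω))) (t, (w, c))
      = (1 / (m:ℝ)) * pr p (fun ω => (W' ω, C' ω)) (w, c) := by
    intro t w c
    have base : pr p (fun ω => (S' ω + S ω, (W' ω, C' ω))) (t, (w, c))
        = ∑ z : ZMod m × (𝒲 × 𝒞 × ZMod m),
            if (z.2.2.2 + z.1, (z.2.1, z.2.2.1)) = (t, (w, c))
            then pr p (fun ω => (S ω, W ω)) z else 0 :=
      pr_comp p (fun ω => (S ω, W ω)) (fun z => (z.2.2.2 + z.1, (z.2.1, z.2.2.1))) (t, (w, c))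
    rw [base]
    have hjoint : ∀ z : ZMod m × (𝒲 × 𝒞 × ZMod m),
        pr p (fun ω => (S ω, W ω)) z = (1 / (m:ℝ)) * pr p W z.2 := by
      intro z
      rw [show pr p (fun ω => (S ω, W ω)) z = pr p (fun ω => (S ω, W ω)) (z.1, z.2) from rfl,
        hind z.1 z.2, hS]
    simp_rw [hjoint]
    rw [Fintype.sum_prod_type, Finset.sum_comm]
    dsimp only
    have inner : ∀ y : 𝒲 × 𝒞 × ZMod m,
        (∑ s : ZMod m, if (y.2.2 + s, (y.1, y.2.1)) = (t, (w, c))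
          then (1 / (m:ℝ)) * pr p W y else 0)
        = if (y.1, y.2.1) = (w, c) then (1 / (m:ℝ)) * pr p W y else 0 := by
      intro y
      rw [Finset.sum_eq_single (t - y.2.2)]
      · simp
      · intro s _ hs
        have hne : y.2.2 + s ≠ t := fun hcontra => hs (eq_sub_of_add_eq' hcontra)
        simp [Prod.ext_iff, hne]
      · simp
    simp_rw [inner]
    rw [pr_comp p W (fun y => (y.1, y.2.1)) (w, c), Finset.mul_sum]
    refine Finset.sum_congr rfl fun y _ => ?_
    split <;> simp
  have hT : ∀ t : ZMod m, pr p (fun ω => S' ω + S ω) t = 1 / (m:ℝ) := by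
    intro t
    have base : pr p (fun ω => S' ω + S ω) t
        = ∑ z : ZMod m × (𝒲 × 𝒞 × ZMod m),
            if z.2.2.2 + z.1 = t then pr p (fun ω => (S ω, W ω)) z else 0 :=
      pr_comp p (fun ω => (S ω, W ω)) (fun z => z.2.2.2 + z.1) t
    rw [base]
    have hjoint : ∀ z : ZMod m × (𝒲 × 𝒞 × ZMod m),
        pr p (fun ω => (S ω, W ω)) z = (1 / (m:ℝ)) * pr p W z.2 := by
      intro z
      rw [show pr p (fun ω => (S ω, W ω)) z = pr p (fun ω => (S ω, W ω)) (z.1, z.2) from rfl,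
        hind z.1 z.2, hS]
    simp_rw [hjoint]
    rw [Fintype.sum_prod_type, Finset.sum_comm]
    dsimp only
    have inner : ∀ y : 𝒲 × 𝒞 × ZMod m,
        (∑ s : ZMod m, if y.2.2 + s = t then (1 / (m:ℝ)) * pr p W y else 0)
        = (1 / (m:ℝ)) * pr p W y := by
      intro y
      rw [Finset.sum_eq_single (t - y.2.2)]
      · simp
      · intro s _ hs
        have hne : y.2.2 + s ≠ t := fun hcontra => hs (eq_sub_of_add_eq' hcontra)
        simp [hne]
      · simp
    simp_rw [inner]
    rw [← Finset.mul_sum, sum_pr p hp W, mul_one]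
  have iT : IndepRV p (fun ω => S' ω + S ω) (fun ω => (W' ω, C' ω)) := by
    intro t y
    obtain ⟨w, c⟩ := y
    rw [show pr p (fun ω => ((fun ω => S' ω + S ω) ω, (fun ω => (W' ω, C' ω)) ω)) (t, (w, c))
        = pr p (fun ω => (S' ω + S ω, (W' ω, C' ω))) (t, (w, c)) from rfl, hTW t w c, hT t]
  have uT : UniformRV p (fun ω => S' ω + S ω) := fun t => by rw [hT t, ZMod.card]
  have entT : ent p (fun ω => S' ω + S ω) = Real.log m := by
    rw [ent_uniform p _ uT, ZMod.card]
  -- E3 : H((W', S'+S), C') = log m + H(W', C')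
  have E3 : ent p (fun ω => ((W' ω, S' ω + S ω), C' ω))
      = Real.log m + ent p (fun ω => (W' ω, C' ω)) := by
    have h : ent p (fun ω => ((W' ω, S' ω + S ω), C' ω))
        = ent p (fun ω => (S' ω + S ω, (W' ω, C' ω))) :=
      ent_equiv p (fun ω => (S' ω + S ω, (W' ω, C' ω))) (eAssoc m 𝒲 𝒞)
    rw [h, ent_pair_of_indep p hp _ _ iT, entT]
  -- E4 : H((W', S'), C') = H(S', (W', C'))
  have E4 : ent p (fun ω => ((W' ω, S' ω), C' ω))
      = ent p (fun ω => (S' ω, (W' ω, C' ω))) :=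
    ent_equiv p (fun ω => (S' ω, (W' ω, C' ω))) (eAssoc m 𝒲 𝒞)
  simp only [condMI, condEnt]
  rw [E1, E2, E3, E4]
  linarith [le_refl (0:ℝ)]
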